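/- Let ∼ be an equivalence relation on traces, let C₁, C₂ be channels from finite sets X₁, X₂ to finite trace sets Y₁, Y₂ respectively, let π be a prior on X₁×X₂, let S be a ∼-blind scheduler on Y₁, Y₂, let Obs be a deterministic ∼-observer on Int(Y₁,Y₂) with views the ∼-classes, and let Obs× be the deterministic observer on Y₁×Y₂ mapping each pair (y₁,y₂) to the pair of ∼-classes ([y₁]∼, [y₂]∼). Then the observed min-entropy leakage of the scheduled composition is at most that of the parallel composition: L(π, Comp_S(C₁,C₂)·Obs) ≤ L(π, (C₁×C₂)·Obs×). -/
import Mathlib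


open scoped Classical BigOperators

noncomputable section

/-- A (row-stochastic) channel matrix whose outputs range over a finite set `Ys`. -/
def FIsChannel {X B : Type*} (Ys : Finset B) (C : X → B → ℝ) : Prop :=
  (∀ x y, 0 ≤ C x y) ∧ ∀ x, ∑ y ∈ Ys, C x y = 1

/-- A prior (probability distribution). -/
def IsPrior {X : Type*} [Fintype X] (π : X → ℝ) : Prop :=
  (∀ x, 0 ≤ π x) ∧ ∑ x, π x = 1

/-- Cascade composition of channels (matrix product), outputs of the first ranging
over the finite set `Ys`. -/
def Fcascade {X B Z : Type*} (Ys : Finset B) (C : X → B → ℝ) (D : B → Z → ℝ) :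
    X → Z → ℝ :=
  fun x z => ∑ y ∈ Ys, C x y * D y z

/-- Mutual information (base-2), with `0`-probability terms taken to be `0`. -/
def FMI {X B : Type*} [Fintype X] (π : X → ℝ) (Ys : Finset B) (C : X → B → ℝ) : ℝ :=
  ∑ x, ∑ y ∈ Ys, if π x * C x y = 0 then 0
    else π x * C x y * Real.logb 2 (C x y / ∑ x', π x' * C x' y)

/-- Prior vulnerability. -/
def Vprior {X : Type*} [Fintype X] [Nonempty X] (π : X → ℝ) : ℝ :=
  Finset.univ.sup' Finset.univ_nonempty π

/-- Posterior vulnerability. -/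
def FVpost {X B : Type*} [Fintype X] [Nonempty X]
    (π : X → ℝ) (Ys : Finset B) (C : X → B → ℝ) : ℝ :=
  ∑ y ∈ Ys, Finset.univ.sup' Finset.univ_nonempty (fun x => π x * C x y)

/-- Min-entropy leakage. -/
def FMEL {X B : Type*} [Fintype X] [Nonempty X]
    (π : X → ℝ) (Ys : Finset B) (C : X → B → ℝ) : ℝ :=
  Real.logb 2 (FVpost π Ys C) - Real.logb 2 (Vprior π)

/-- Min-capacity: supremum of min-entropy leakage over all priors. -/
def FMinCap {X B : Type*} [Fintype X] [Nonempty X] (Ys : Finset B) (C : X → B → ℝ) : ℝ :=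
  sSup {l : ℝ | ∃ π : X → ℝ, IsPrior π ∧ l = FMEL π Ys C}

/-- All interleavings (shuffles) of two traces. -/
def interleavings {A : Type*} : List A → List A → List (List A)
  | [], ys => [ys]
  | x :: xs, [] => [x :: xs]
  | x :: xs, y :: ys =>
      ((interleavings xs (y :: ys)).map (x :: ·)) ++
        ((interleavings (x :: xs) ys).map (y :: ·))
termination_by l₁ l₂ => l₁.length + l₂.length

/-- The interleaving `Int(y₁, y₂)` of two traces, as a finite set. -/
def IntF {A : Type*} [DecidableEq A] (y₁ y₂ : List A) : Finset (List A) :=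
  (interleavings y₁ y₂).toFinset

/-- The interleaving `Int(Y₁, Y₂)` of two finite sets of traces. -/
def IntSet {A : Type*} [DecidableEq A] (Y₁ Y₂ : Finset (List A)) : Finset (List A) :=
  Y₁.biUnion fun y₁ => Y₂.biUnion fun y₂ => IntF y₁ y₂

/-- A scheduler on `Y₁`, `Y₂`: for each pair of traces it yields a probability
distribution supported on their interleavings. -/
def IsScheduler {A : Type*} [DecidableEq A] (Y₁ Y₂ : Finset (List A))
    (S : List A → List A → List A → ℝ) : Prop :=
  ∀ y₁ ∈ Y₁, ∀ y₂ ∈ Y₂,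
    (∀ y, 0 ≤ S y₁ y₂ y) ∧ (∀ y, y ∉ IntF y₁ y₂ → S y₁ y₂ y = 0) ∧
      ∑ y ∈ IntF y₁ y₂, S y₁ y₂ y = 1

/-- The scheduled composition of two channels with respect to a scheduler. -/
def Comp {A X₁ X₂ : Type*} (Y₁ Y₂ : Finset (List A))
    (C₁ : X₁ → List A → ℝ) (C₂ : X₂ → List A → ℝ)
    (S : List A → List A → List A → ℝ) : X₁ × X₂ → List A → ℝ :=
  fun x y => ∑ y₁ ∈ Y₁, ∑ y₂ ∈ Y₂, C₁ x.1 y₁ * C₂ x.2 y₂ * S y₁ y₂ y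

/-- The (disjoint) parallel composition of two channels. -/
def Par {A X₁ X₂ : Type*} (C₁ : X₁ → List A → ℝ) (C₂ : X₂ → List A → ℝ) :
    X₁ × X₂ → List A × List A → ℝ :=
  fun x y => C₁ x.1 y.1 * C₂ x.2 y.2

/-- A `∼`-blind scheduler: two pairs of component traces are componentwise
`∼`-equivalent iff the scheduled output distributions are
`∼`-indistinguishable. -/
def SimBlind {A : Type*} [DecidableEq A] (r : List A → List A → Prop)
    (Y₁ Y₂ : Finset (List A)) (S : List A → List A → List A → ℝ) : Prop :=
  ∀ y₁ ∈ Y₁, ∀ y₂ ∈ Y₂, ∀ y₁' ∈ Y₁, ∀ y₂' ∈ Y₂,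
    ((r y₁ y₁' ∧ r y₂ y₂') ↔
      ∀ t : List A,
        ∑ y ∈ (IntSet Y₁ Y₂).filter (fun y => r y t), S y₁ y₂ y =
          ∑ y ∈ (IntSet Y₁ Y₂).filter (fun y => r y t), S y₁' y₂' y)

/-- The deterministic `∼`-observer on traces, with views the `∼`-classes. -/
def detObs {A : Type*} (s : Setoid (List A)) : List A → Quotient s → ℝ :=
  fun y z => if z = Quotient.mk s y then 1 else 0

/-- The deterministic observer on pairs of traces mapping each pair to its pair
of `∼`-classes. -/
def detObsPair {A : Type*} (s : Setoid (List A)) :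
    List A × List A → Quotient s × Quotient s → ℝ :=
  fun p q => if q = (Quotient.mk s p.1, Quotient.mk s p.2) then 1 else 0

/-- under a `∼`-blind scheduler, the observed min-entropy leakage
of the scheduled composition (under the deterministic `∼`-observer) is at most
that of the parallel composition (under the componentwise `∼`-class observer). -/
theorem blind_scheduler_observed_MEL_le_parallel
    {A X₁ X₂ : Type*} [DecidableEq A] [Fintype X₁] [Fintype X₂]
    [Nonempty X₁] [Nonempty X₂]
    (s : Setoid (List A))
    (Y₁ Y₂ : Finset (List A))
    (C₁ : X₁ → List A → ℝ) (C₂ : X₂ → List A → ℝ)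
    (hC₁ : FIsChannel Y₁ C₁) (hC₂ : FIsChannel Y₂ C₂)
    (π : X₁ × X₂ → ℝ) (hπ : IsPrior π)
    (S : List A → List A → List A → ℝ) (hS : IsScheduler Y₁ Y₂ S)
    (hblind : SimBlind (fun a b => s.r a b) Y₁ Y₂ S) :
    FMEL π ((IntSet Y₁ Y₂).image (Quotient.mk s))
        (Fcascade (IntSet Y₁ Y₂) (Comp Y₁ Y₂ C₁ C₂ S) (detObs s)) ≤
      FMEL π ((Y₁ ×ˢ Y₂).image (fun p => (Quotient.mk s p.1, Quotient.mk s p.2)))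
        (Fcascade (Y₁ ×ˢ Y₂) (Par C₁ C₂) (detObsPair s)) := by
  classical
  obtain ⟨hC₁0, hC₁1⟩ := hC₁
  obtain ⟨hC₂0, hC₂1⟩ := hC₂
  obtain ⟨hπ0, hπ1⟩ := hπ
  set f : List A × List A → Quotient s × Quotient s :=
    fun p => (Quotient.mk s p.1, Quotient.mk s p.2) with hf
  set ZL := (IntSet Y₁ Y₂).image (Quotient.mk s) with hZL
  set ZR := (Y₁ ×ˢ Y₂).image f with hZR
  set CL := Fcascade (IntSet Y₁ Y₂) (Comp Y₁ Y₂ C₁ C₂ S) (detObs s) with hCLdef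
  set CR := Fcascade (Y₁ ×ˢ Y₂) (Par C₁ C₂) (detObsPair s) with hCRdef
  set T : List A → List A → Quotient s → ℝ :=
    fun y₁ y₂ z => ∑ y ∈ IntSet Y₁ Y₂, S y₁ y₂ y * detObs s y z with hTdef
  have hsub : ∀ y₁ ∈ Y₁, ∀ y₂ ∈ Y₂, IntF y₁ y₂ ⊆ IntSet Y₁ Y₂ := by
    intro y₁ h₁ y₂ h₂ y hy
    exact Finset.mem_biUnion.2 ⟨y₁, h₁, Finset.mem_biUnion.2 ⟨y₂, h₂, hy⟩⟩
  have hSsum : ∀ y₁ ∈ Y₁, ∀ y₂ ∈ Y₂, ∑ y ∈ IntSet Y₁ Y₂, S y₁ y₂ y = 1 := by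
    intro y₁ h₁ y₂ h₂
    rw [← Finset.sum_subset (hsub y₁ h₁ y₂ h₂) (fun y _ hy => (hS y₁ h₁ y₂ h₂).2.1 y hy)]
    exact (hS y₁ h₁ y₂ h₂).2.2
  have hT_filter : ∀ y₁ y₂ t, T y₁ y₂ (Quotient.mk s t) =
      ∑ y ∈ (IntSet Y₁ Y₂).filter (fun y => s.r y t), S y₁ y₂ y := by
    intro y₁ y₂ t
    rw [Finset.sum_filter]
    simp only [hTdef, detObs]
    refine Finset.sum_congr rfl fun y _ => ?_
    by_cases h : s.r y t
    · rw [if_pos (Quotient.sound (s.symm h)), if_pos h, mul_one]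
    · rw [if_neg, if_neg h, mul_zero]
      intro he
      exact h (s.symm (Quotient.eq.mp he))
  have hTcong : ∀ y₁ ∈ Y₁, ∀ y₂ ∈ Y₂, ∀ y₁' ∈ Y₁, ∀ y₂' ∈ Y₂,
      s.r y₁ y₁' → s.r y₂ y₂' → ∀ z, T y₁ y₂ z = T y₁' y₂' z := by
    intro y₁ h₁ y₂ h₂ y₁' h₁' y₂' h₂' hr₁ hr₂ z
    obtain ⟨t, rfl⟩ := Quotient.exists_rep z
    rw [hT_filter, hT_filter]
    exact (hblind y₁ h₁ y₂ h₂ y₁' h₁' y₂' h₂').mp ⟨hr₁, hr₂⟩ t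
  set Tq : Quotient s × Quotient s → Quotient s → ℝ :=
    fun q z => if h : ∃ p : List A × List A, p ∈ Y₁ ×ˢ Y₂ ∧ f p = q
      then T h.choose.1 h.choose.2 z else 0 with hTqdef
  have hTq_eq : ∀ p : List A × List A, p ∈ Y₁ ×ˢ Y₂ → ∀ z, Tq (f p) z = T p.1 p.2 z := by
    intro p hp z
    have hex : ∃ p' : List A × List A, p' ∈ Y₁ ×ˢ Y₂ ∧ f p' = f p := ⟨p, hp, rfl⟩
    simp only [hTqdef]
    rw [dif_pos hex]
    obtain ⟨hmem, heq⟩ := hex.choose_spec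
    have h1 : Quotient.mk s hex.choose.1 = Quotient.mk s p.1 := congrArg Prod.fst heq
    have h2 : Quotient.mk s hex.choose.2 = Quotient.mk s p.2 := congrArg Prod.snd heq
    exact hTcong _ (Finset.mem_product.mp hmem).1 _ (Finset.mem_product.mp hmem).2
      _ (Finset.mem_product.mp hp).1 _ (Finset.mem_product.mp hp).2
      (Quotient.eq.mp h1) (Quotient.eq.mp h2) z
  have hT_nonneg : ∀ y₁ ∈ Y₁, ∀ y₂ ∈ Y₂, ∀ z, 0 ≤ T y₁ y₂ z := by
    intro y₁ h₁ y₂ h₂ z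
    simp only [hTdef]
    refine Finset.sum_nonneg fun y _ => mul_nonneg ((hS y₁ h₁ y₂ h₂).1 y) ?_
    unfold detObs; positivity
  have hT_sumZL : ∀ y₁ ∈ Y₁, ∀ y₂ ∈ Y₂, ∑ z ∈ ZL, T y₁ y₂ z = 1 := by
    intro y₁ h₁ y₂ h₂
    simp only [hTdef]
    rw [Finset.sum_comm]
    have h0 : ∀ y ∈ IntSet Y₁ Y₂, ∑ z ∈ ZL, S y₁ y₂ y * detObs s y z = S y₁ y₂ y := by
      intro y hy
      rw [← Finset.mul_sum]
      have hz : Quotient.mk s y ∈ ZL := Finset.mem_image_of_mem _ hy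
      simp [detObs, Finset.sum_ite_eq', hz]
    rw [Finset.sum_congr rfl h0, hSsum y₁ h₁ y₂ h₂]
  have hTq_nonneg : ∀ q ∈ ZR, ∀ z, 0 ≤ Tq q z := by
    intro q hq z
    obtain ⟨p, hp, hpq⟩ := Finset.mem_image.mp hq
    rw [← hpq, hTq_eq p hp]
    exact hT_nonneg _ (Finset.mem_product.mp hp).1 _ (Finset.mem_product.mp hp).2 z
  have hTq_sum : ∀ q ∈ ZR, ∑ z ∈ ZL, Tq q z = 1 := by
    intro q hq
    obtain ⟨p, hp, hpq⟩ := Finset.mem_image.mp hq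
    rw [← hpq, Finset.sum_congr rfl fun z _ => hTq_eq p hp z]
    exact hT_sumZL _ (Finset.mem_product.mp hp).1 _ (Finset.mem_product.mp hp).2
  have hCL_eq : ∀ x z, CL x z = ∑ p ∈ Y₁ ×ˢ Y₂, Par C₁ C₂ x p * Tq (f p) z := by
    intro x z
    simp only [hCLdef, Fcascade, Comp]
    calc ∑ y ∈ IntSet Y₁ Y₂,
          (∑ y₁ ∈ Y₁, ∑ y₂ ∈ Y₂, C₁ x.1 y₁ * C₂ x.2 y₂ * S y₁ y₂ y) * detObs s y z
        = ∑ y ∈ IntSet Y₁ Y₂, ∑ y₁ ∈ Y₁, ∑ y₂ ∈ Y₂,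
            C₁ x.1 y₁ * C₂ x.2 y₂ * (S y₁ y₂ y * detObs s y z) := by
          refine Finset.sum_congr rfl fun y _ => ?_
          rw [Finset.sum_mul]
          refine Finset.sum_congr rfl fun y₁ _ => ?_
          rw [Finset.sum_mul]
          exact Finset.sum_congr rfl fun y₂ _ => by ring
      _ = ∑ y₁ ∈ Y₁, ∑ y₂ ∈ Y₂, C₁ x.1 y₁ * C₂ x.2 y₂ * T y₁ y₂ z := by
          rw [Finset.sum_comm]
          refine Finset.sum_congr rfl fun y₁ _ => ?_
          rw [Finset.sum_comm]
          refine Finset.sum_congr rfl fun y₂ _ => ?_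
          simp only [hTdef]
          rw [← Finset.mul_sum]
      _ = ∑ p ∈ Y₁ ×ˢ Y₂, Par C₁ C₂ x p * Tq (f p) z := by
          rw [Finset.sum_product]
          refine Finset.sum_congr rfl fun y₁ h₁ => Finset.sum_congr rfl fun y₂ h₂ => ?_
          rw [hTq_eq (y₁, y₂) (Finset.mem_product.mpr ⟨h₁, h₂⟩)]
          rfl
  have hfiber : ∀ (x : X₁ × X₂) (w : Quotient s × Quotient s → ℝ),
      ∑ q ∈ ZR, CR x q * w q = ∑ p ∈ Y₁ ×ˢ Y₂, Par C₁ C₂ x p * w (f p) := by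
    intro x w
    simp only [hCRdef, Fcascade, detObsPair]
    calc ∑ q ∈ ZR, (∑ p ∈ Y₁ ×ˢ Y₂,
          Par C₁ C₂ x p * (if q = (Quotient.mk s p.1, Quotient.mk s p.2) then 1 else 0)) * w q
        = ∑ q ∈ ZR, ∑ p ∈ Y₁ ×ˢ Y₂,
            (if q = f p then Par C₁ C₂ x p * w (f p) else 0) := by
          refine Finset.sum_congr rfl fun q _ => ?_
          rw [Finset.sum_mul]
          refine Finset.sum_congr rfl fun p _ => ?_
          simp only [hf]
          by_cases h : q = (Quotient.mk s p.1, Quotient.mk s p.2)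
          · rw [if_pos h, if_pos h, h]; ring
          · rw [if_neg h, if_neg h]; ring
      _ = ∑ p ∈ Y₁ ×ˢ Y₂, ∑ q ∈ ZR,
            (if q = f p then Par C₁ C₂ x p * w (f p) else 0) := Finset.sum_comm
      _ = ∑ p ∈ Y₁ ×ˢ Y₂, Par C₁ C₂ x p * w (f p) := by
          refine Finset.sum_congr rfl fun p hp => ?_
          have hm : f p ∈ ZR := Finset.mem_image_of_mem _ hp
          simp [Finset.sum_ite_eq', hm]
  have hdecomp : ∀ x z, CL x z = ∑ q ∈ ZR, CR x q * Tq q z := by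
    intro x z
    rw [hCL_eq x z, ← hfiber x (fun q => Tq q z)]
  have hParsum : ∀ x : X₁ × X₂, ∑ p ∈ Y₁ ×ˢ Y₂, Par C₁ C₂ x p = 1 := by
    intro x
    rw [Finset.sum_product]
    simp only [Par]
    rw [← Finset.sum_mul_sum, hC₁1, hC₂1, one_mul]
  have hCRsum : ∀ x, ∑ q ∈ ZR, CR x q = 1 := by
    intro x
    have h := hfiber x (fun _ => 1)
    simp only [mul_one] at h
    rw [h, hParsum x]
  have hCLsum : ∀ x, ∑ z ∈ ZL, CL x z = 1 := by
    intro x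
    rw [Finset.sum_congr rfl fun z _ => hdecomp x z, Finset.sum_comm]
    rw [Finset.sum_congr rfl fun q hq => by rw [← Finset.mul_sum, hTq_sum q hq, mul_one]]
    exact hCRsum x
  -- posterior vulnerability inequality
  have hVle : FVpost π ZL CL ≤ FVpost π ZR CR := by
    simp only [FVpost]
    calc ∑ z ∈ ZL, Finset.univ.sup' Finset.univ_nonempty (fun x => π x * CL x z)
        ≤ ∑ z ∈ ZL, ∑ q ∈ ZR,
            (Finset.univ.sup' Finset.univ_nonempty (fun x => π x * CR x q)) * Tq q z := by
          refine Finset.sum_le_sum fun z _ => ?_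
          refine Finset.sup'_le _ _ fun x _ => ?_
          rw [hdecomp x z, Finset.mul_sum]
          refine Finset.sum_le_sum fun q hq => ?_
          rw [← mul_assoc]
          exact mul_le_mul_of_nonneg_right
            (Finset.le_sup' (fun x => π x * CR x q) (Finset.mem_univ x)) (hTq_nonneg q hq z)
      _ = ∑ q ∈ ZR, Finset.univ.sup' Finset.univ_nonempty (fun x => π x * CR x q) := by
          rw [Finset.sum_comm]
          refine Finset.sum_congr rfl fun q hq => ?_
          rw [← Finset.mul_sum, hTq_sum q hq, mul_one]
  -- positivity
  have hVp_pos : 0 < Vprior π := by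
    have hex : ∃ x, 0 < π x := by
      by_contra h
      push_neg at h
      have h0 : ∑ x, π x = 0 := Finset.sum_eq_zero fun x _ => le_antisymm (h x) (hπ0 x)
      rw [hπ1] at h0
      norm_num at h0
    obtain ⟨x0, hx0⟩ := hex
    exact lt_of_lt_of_le hx0 (Finset.le_sup' π (Finset.mem_univ x0))
  have hVL_ge : Vprior π ≤ FVpost π ZL CL := by
    obtain ⟨x0, -, hx0⟩ := Finset.exists_mem_eq_sup' Finset.univ_nonempty π
    calc Vprior π = π x0 := hx0
      _ = π x0 * ∑ z ∈ ZL, CL x0 z := by rw [hCLsum x0, mul_one]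
      _ = ∑ z ∈ ZL, π x0 * CL x0 z := Finset.mul_sum _ _ _
      _ ≤ FVpost π ZL CL := by
          refine Finset.sum_le_sum fun z _ => ?_
          exact Finset.le_sup' (fun x => π x * CL x z) (Finset.mem_univ x0)
  have hVL_pos : 0 < FVpost π ZL CL := lt_of_lt_of_le hVp_pos hVL_ge
  simp only [FMEL]
  have := Real.logb_le_logb_of_le (one_lt_two) hVL_pos hVle
  linarith
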